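/- Let R be a symmetric deterministic rule of order k, i.e. for each F ∈ H_k there is a unique G ∈ H_k such that R_{F,H} = 1[H = G] for all H, and R_{σ·F,σ·H} = R_{F,H} for all F,H ∈ H_k and σ ∈ S_k. If R' is any rule of order k such that a_{J,R'} = a_{J,R} for every isomorphism class J ∈ J_k of rooted graphs, then R' = R. -/

import Mathlib

open scoped Classical

/-- `H_k`: the set of labelled graphs on `[k]`. -/
abbrev SG (k : ℕ) := SimpleGraph (Fin k)

/-- A rule of order `k`: a row-stochastic matrix indexed by labelled graphs on `[k]`. -/
def IsRule {k : ℕ} (R : SG k → SG k → ℝ) : Prop :=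
  (∀ F H : SG k, 0 ≤ R F H ∧ R F H ≤ 1) ∧ (∀ F : SG k, ∑ H : SG k, R F H = 1)

/-- The action of `S_k` on labelled graphs: `σ(i)σ(j) ∈ E(σ·F) ↔ ij ∈ E(F)`. -/
def permGraph {k : ℕ} (σ : Equiv.Perm (Fin k)) (F : SG k) : SG k :=
  SimpleGraph.comap (⇑σ.symm) F

/-- The indicator `1[ab ∈ E(H)]`. -/
noncomputable def eInd {k : ℕ} (a b : Fin k) (H : SG k) : ℝ := if H.Adj a b then 1 else 0

/-- The orbit (= isomorphism class) of the rooted graph `F^{a,b}` under the coordinatewise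
action of `S_k` on `G_k = H_k × [k]^{(2)}`. -/
noncomputable def rgOrbit {k : ℕ} (F : SG k) (a b : Fin k) :
    Finset (SG k × Fin k × Fin k) :=
  Finset.univ.filter (fun p => ∃ σ : Equiv.Perm (Fin k),
    p.1 = permGraph σ F ∧ p.2.1 = σ a ∧ p.2.2 = σ b)

/-- The quantity `a_{J,R}` for a set `J` of rooted graphs `F^{a,b}`. -/
noncomputable def aCoeff {k : ℕ} (R : SG k → SG k → ℝ)
    (J : Finset (SG k × Fin k × Fin k)) : ℝ :=
  ∑ p ∈ J, ((∑ H : SG k, R p.1 H * eInd p.2.1 p.2.2 H) - eInd p.2.1 p.2.2 p.1)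

/- ### Auxiliary lemmas -/

lemma eInd_perm {k} (σ : Equiv.Perm (Fin k)) (a b : Fin k) (H : SG k) :
    eInd (σ a) (σ b) (permGraph σ H) = eInd a b H := by
  simp [eInd, permGraph]

lemma permGraph_one {k} (F : SG k) : permGraph 1 F = F := by
  ext x y; simp [permGraph, Equiv.Perm.one_symm]

lemma sum_ite_mul' {k} (G : SG k) (f : SG k → ℝ) :
    ∑ H : SG k, (if H = G then (1:ℝ) else 0) * f H = f G := by
  simp [ite_mul]

lemma mem_rgOrbit_self {k} (F : SG k) (a b : Fin k) : (F, a, b) ∈ rgOrbit F a b := by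
  simp only [rgOrbit, Finset.mem_filter, Finset.mem_univ, true_and]
  exact ⟨1, by simp [permGraph_one]⟩

lemma rgOrbit_exists {k} {F : SG k} {a b : Fin k} {p : SG k × Fin k × Fin k}
    (hp : p ∈ rgOrbit F a b) :
    ∃ σ : Equiv.Perm (Fin k), p.1 = permGraph σ F ∧ p.2.1 = σ a ∧ p.2.2 = σ b := by
  simpa only [rgOrbit, Finset.mem_filter, Finset.mem_univ, true_and] using hp

/-- Let `R` be a symmetric deterministic rule of order `k` and let `R'` be
any rule of order `k` with `a_{J,R'} = a_{J,R}` for every isomorphism class `J ∈ J_k` of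
rooted graphs (i.e. every orbit `Orb(F^{a,b})` with `a ≠ b`).  Then `R' = R`. -/
theorem stmt18 {k : ℕ} (R R' : SG k → SG k → ℝ) (hR : IsRule R) (hR' : IsRule R')
    (hdet : ∀ F : SG k, ∃ G : SG k, ∀ H : SG k, R F H = if H = G then 1 else 0)
    (hsym : ∀ (σ : Equiv.Perm (Fin k)) (F H : SG k),
      R (permGraph σ F) (permGraph σ H) = R F H)
    (h : ∀ (F : SG k) (a b : Fin k), a ≠ b →
      aCoeff R' (rgOrbit F a b) = aCoeff R (rgOrbit F a b)) :
    R' = R := by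
  obtain ⟨hR'01, hR'sum⟩ := hR'
  funext F H0
  obtain ⟨G, hG⟩ := hdet F
  -- determinism at permuted graphs
  have hdetp : ∀ (σ : Equiv.Perm (Fin k)) (H : SG k),
      R (permGraph σ F) H = if H = permGraph σ G then 1 else 0 := by
    intro σ
    obtain ⟨G', hG'⟩ := hdet (permGraph σ F)
    have h1 : R (permGraph σ F) (permGraph σ G) = 1 := by rw [hsym]; simp [hG]
    have hGG : permGraph σ G = G' := by
      by_contra hne
      rw [hG', if_neg hne] at h1; norm_num at h1
    intro H; rw [hG', hGG]
  -- the key step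
  have hz : ∀ H : SG k, H ≠ G → R' F H = 0 := by
    intro H hne
    have hex : ∃ a b : Fin k, ¬ (H.Adj a b ↔ G.Adj a b) := by
      by_contra hall
      push_neg at hall
      exact hne (SimpleGraph.ext (by ext a b; exact hall a b))
    obtain ⟨a, b, hab⟩ := hex
    -- facts about the orbit sums
    have hEF : ∀ p ∈ rgOrbit F a b, eInd p.2.1 p.2.2 p.1 = eInd a b F := by
      intro p hp
      obtain ⟨σ, h1, h2, h3⟩ := rgOrbit_exists hp
      rw [h1, h2, h3, eInd_perm]
    have hS : ∀ p ∈ rgOrbit F a b,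
        (∑ H' : SG k, R p.1 H' * eInd p.2.1 p.2.2 H') = eInd a b G := by
      intro p hp
      obtain ⟨σ, h1, h2, h3⟩ := rgOrbit_exists hp
      rw [h1, h2, h3]
      simp only [hdetp σ]
      rw [sum_ite_mul', eInd_perm]
    have hS'nonneg : ∀ p : SG k × Fin k × Fin k,
        0 ≤ ∑ H' : SG k, R' p.1 H' * eInd p.2.1 p.2.2 H' := by
      intro p
      refine Finset.sum_nonneg fun H' _ => mul_nonneg (hR'01 p.1 H').1 ?_
      unfold eInd; positivity
    have hS'le : ∀ p : SG k × Fin k × Fin k,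
        (∑ H' : SG k, R' p.1 H' * eInd p.2.1 p.2.2 H') ≤ 1 := by
      intro p
      calc (∑ H' : SG k, R' p.1 H' * eInd p.2.1 p.2.2 H')
          ≤ ∑ H' : SG k, R' p.1 H' := by
            refine Finset.sum_le_sum fun H' _ => ?_
            have h01 := hR'01 p.1 H'
            have : eInd p.2.1 p.2.2 H' ≤ 1 := by unfold eInd; split <;> norm_num
            nlinarith [h01.1, hS'nonneg, this]
        _ = 1 := hR'sum p.1
    -- split on which adjacency differs
    by_cases hHadj : H.Adj a b
    · -- then ¬ G.Adj a b, and the orbit forces the R'-row to avoid edge ab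
      have hGadj : ¬ G.Adj a b := fun hg => hab ⟨fun _ => hg, fun _ => hHadj⟩
      have hneq : a ≠ b := hHadj.ne
      have hle : ∀ p ∈ rgOrbit F a b,
          ((∑ H' : SG k, R p.1 H' * eInd p.2.1 p.2.2 H') - eInd p.2.1 p.2.2 p.1)
          ≤ ((∑ H' : SG k, R' p.1 H' * eInd p.2.1 p.2.2 H') - eInd p.2.1 p.2.2 p.1) := by
        intro p hp
        have := hS p hp
        have h0 : eInd a b G = 0 := by simp [eInd, hGadj]
        rw [this, h0]
        linarith [hS'nonneg p]
      have hsum : aCoeff R (rgOrbit F a b) = aCoeff R' (rgOrbit F a b) := (h F a b hneq).symm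
      have heq := (Finset.sum_eq_sum_iff_of_le hle).mp hsum
      have hp0 := heq _ (mem_rgOrbit_self F a b)
      simp only at hp0
      have hs0 : (∑ H' : SG k, R' F H' * eInd a b H') = 0 := by
        have h0 : eInd a b G = 0 := by simp [eInd, hGadj]
        have := hS _ (mem_rgOrbit_self F a b)
        simp only at this
        linarith [hp0, this, h0.symm ▸ this]
      have hall0 := (Finset.sum_eq_zero_iff_of_nonneg
        (fun H' _ => mul_nonneg (hR'01 F H').1 (by unfold eInd; positivity))).mp hs0
      have := hall0 H (Finset.mem_univ H)
      rw [show eInd a b H = 1 by simp [eInd, hHadj]] at this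
      linarith
    · -- then G.Adj a b, and the orbit forces the R'-row to include edge ab
      have hGadj : G.Adj a b := by
        by_contra hg
        exact hab ⟨fun hh => absurd hh hHadj, fun hh => absurd hh hg⟩
      have hneq : a ≠ b := hGadj.ne
      have hle : ∀ p ∈ rgOrbit F a b,
          ((∑ H' : SG k, R' p.1 H' * eInd p.2.1 p.2.2 H') - eInd p.2.1 p.2.2 p.1)
          ≤ ((∑ H' : SG k, R p.1 H' * eInd p.2.1 p.2.2 H') - eInd p.2.1 p.2.2 p.1) := by
        intro p hp
        have := hS p hp
        have h1 : eInd a b G = 1 := by simp [eInd, hGadj]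
        rw [this, h1]
        linarith [hS'le p]
      have hsum : aCoeff R' (rgOrbit F a b) = aCoeff R (rgOrbit F a b) := h F a b hneq
      have heq := (Finset.sum_eq_sum_iff_of_le hle).mp hsum
      have hp0 := heq _ (mem_rgOrbit_self F a b)
      simp only at hp0
      have hs1 : (∑ H' : SG k, R' F H' * eInd a b H') = 1 := by
        have h1 : eInd a b G = 1 := by simp [eInd, hGadj]
        have := hS _ (mem_rgOrbit_self F a b)
        simp only at this
        linarith
      -- so the row puts no mass on graphs missing edge ab
      have hs0 : (∑ H' : SG k, R' F H' * (1 - eInd a b H')) = 0 := by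
        have : (∑ H' : SG k, R' F H' * (1 - eInd a b H'))
            = (∑ H' : SG k, R' F H') - (∑ H' : SG k, R' F H' * eInd a b H') := by
          rw [← Finset.sum_sub_distrib]
          congr 1; ext H'; ring
        rw [this, hR'sum F, hs1]; ring
      have hall0 := (Finset.sum_eq_zero_iff_of_nonneg
        (fun H' _ => mul_nonneg (hR'01 F H').1
          (by unfold eInd; split <;> norm_num))).mp hs0
      have := hall0 H (Finset.mem_univ H)
      rw [show eInd a b H = 0 by simp [eInd, hHadj]] at this
      linarith
  -- conclude
  have h1 : R' F G = 1 := by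
    have hsum := hR'sum F
    rwa [Finset.sum_eq_single G (fun b _ hb => hz b hb)
      (fun hGm => absurd (Finset.mem_univ G) hGm)] at hsum
  rw [hG H0]
  by_cases hH0 : H0 = G
  · subst hH0; simp [h1]
  · rw [if_neg hH0]; exact hz H0 hH0
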